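/- If λ ∈ ℍ \ ℝ is a spherical root of f ∈ ℍ[X], then λ is a root of the companion polynomial of f: eval λ C_f = 0. -/

import Mathlib

open Polynomial

/-- A spherical root of `f ∈ ℍ[X]`: a non-real `λ` such that every root of the
characteristic polynomial `p_λ(x) = x² − tr(λ)x + n(λ)` of `λ` is a root of `f`. -/
def SphericalRoot (f : Polynomial (Quaternion ℝ)) (lam : Quaternion ℝ) : Prop :=
  lam ∉ Set.range (algebraMap ℝ (Quaternion ℝ)) ∧
    ∀ r : Quaternion ℝ,
      r ^ 2 - (2 * lam.re) • r + ((Quaternion.normSq lam : ℝ) : Quaternion ℝ) = 0 →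
        Polynomial.eval r f = 0

/-- The conjugate polynomial `conj(f) = ∑ₖ (star aₖ) Xᵏ`. -/
noncomputable def polyConj (f : Polynomial (Quaternion ℝ)) : Polynomial (Quaternion ℝ) :=
  f.sum fun k a => C (star a) * X ^ k

/-- The companion polynomial `C_f = conj(f) · f`. -/
noncomputable def companion (f : Polynomial (Quaternion ℝ)) : Polynomial (Quaternion ℝ) :=
  polyConj f * f

theorem Quaternion.sq_sub_two_re_smul_add_normSq {R : Type*} [CommRing R] (a : Quaternion R) :
    a ^ 2 - (2 * a.re) • a + ((normSq a : R) : Quaternion R) = 0 := by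
  rw [← coe_mul_eq_smul, ← self_add_star', ← star_mul_self, sq, add_mul]
  abel

/-- Over a noncommutative ring evaluation is not multiplicative, but a right factor's roots
survive: `X` is central, so `(c * X ^ n * q).eval a = c * q.eval a * a ^ n`. -/
theorem Polynomial.eval_mul_eq_zero_of_right {R : Type*} [Semiring R] (p : R[X]) {q : R[X]}
    {a : R} (hq : q.eval a = 0) : (p * q).eval a = 0 := by
  induction p using Polynomial.induction_on' with
  | add p r hp hr => rw [add_mul, eval_add, hp, hr, add_zero]
  | monomial n c =>
    rw [← C_mul_X_pow_eq_monomial, mul_assoc, X_pow_mul, ← mul_assoc, eval_mul_X_pow,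
      eval_C_mul, hq, mul_zero, zero_mul]

theorem spherical_root_is_root_of_companion
    (f : Polynomial (Quaternion ℝ)) (lam : Quaternion ℝ)
    (h : SphericalRoot f lam) :
    Polynomial.eval lam (companion f) = 0 :=
  (polyConj f).eval_mul_eq_zero_of_right (h.2 lam lam.sq_sub_two_re_smul_add_normSq)
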